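/- arXiv:2503.14459 — 3 statements merged into one kernel-verified Lean document; each statement's English description precedes it below -/
import Mathlib

section
/- Doubly robust identification of the ATE functional: Let X : Ω → ℝ^d be measurable, T : Ω → ℝ measurable with values in {0,1}, Y : Ω → ℝ measurable, and set 𝒢 = σ(X). Let p be a version of E[T | 𝒢] and assume 0 < p < 1 almost surely. Let π, μ₁, μ₀ : ℝ^d → ℝ be measurable with 0 < π(X) < 1 almost surely, and assume that μ₁(X), μ₀(X), (Y − μ₁(X))·T/π(X), (Y − μ₀(X))·(1−T)/(1−π(X)), Y·T/π(X), Y·(1−T)/(1−π(X)), E[Y·T | 𝒢]/p, and E[Y·(1−T) | 𝒢]/(1−p) are all integrable. If either (i) π(X) = p almost surely, or (ii) E[(Y − μ₁(X))·T | 𝒢] = 0 and E[(Y − μ₀(X))·(1−T) | 𝒢] = 0 almost surely, then θ(π, μ₁, μ₀) = E[ E[Y·T | 𝒢]/E[T | 𝒢] − E[Y·(1−T) | 𝒢]/(1 − E[T | 𝒢]) ]. -/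
/-!
Let `q = E[S | m]` for a treatment indicator `S`, and let `g` and `e` be `m`-measurable.
Pulling the weight `1/e` out of the conditional expectation turns the correction term
`∫ (Y - g)·S/e` into `∫ E[(Y - g)·S | m]/e = ∫ (E[Y·S | m] - g·q)/e`. If `e = q` this is
`∫ E[Y·S | m]/q - ∫ g`; if `E[(Y - g)·S | m] = 0` it vanishes and `E[Y·S | m]/q = g`. Either way
`∫ g + ∫ (Y - g)·S/e = ∫ E[Y·S | m]/q`, and the theorem is the difference of this identity for
`S = T` and for `S = 1 - T`.
-/

open MeasureTheory

section

variable {Ω : Type*} {m mΩ : MeasurableSpace Ω} {P : Measure Ω}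

theorem integral_mul_eq_integral_mul_condExp (hm : m ≤ mΩ) [SigmaFinite (P.trim hm)]
    {w f : Ω → ℝ} (hw : StronglyMeasurable[m] w) (hwf : Integrable (fun ω => w ω * f ω) P)
    (hf : Integrable f P) :
    ∫ ω, w ω * f ω ∂P = ∫ ω, w ω * (P[f | m]) ω ∂P := by
  rw [← integral_condExp hm]
  exact integral_congr_ae (condExp_mul_of_stronglyMeasurable_left hw hwf hf)

theorem condExp_one_sub [IsFiniteMeasure P] (hm : m ≤ mΩ) {f : Ω → ℝ} (hf : Integrable f P) :
    P[fun ω => 1 - f ω | m] =ᵐ[P] fun ω => 1 - (P[f | m]) ω := by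
  have := condExp_sub (integrable_const (1 : ℝ)) hf m
  rwa [condExp_const hm] at this

theorem condExp_sub_mul_ae_eq {Y S g : Ω → ℝ} (hg : StronglyMeasurable[m] g)
    (hS : Integrable S P) (hgS : Integrable (fun ω => g ω * S ω) P)
    (hYS : Integrable (fun ω => Y ω * S ω) P) :
    P[fun ω => (Y ω - g ω) * S ω | m]
      =ᵐ[P] fun ω => (P[fun ω => Y ω * S ω | m]) ω - g ω * (P[S | m]) ω := by
  have hsub : (fun ω => (Y ω - g ω) * S ω) = (fun ω => Y ω * S ω) - g * S := by
    ext ω; simp only [Pi.sub_apply, Pi.mul_apply]; ring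
  rw [hsub]
  exact (condExp_sub hYS hgS m).trans
    (Filter.EventuallyEq.rfl.sub (condExp_mul_of_stronglyMeasurable_left hg hgS hS))

theorem integrable_of_forall_eq_zero_or_eq_one [IsFiniteMeasure P] {S : Ω → ℝ}
    (hS : Measurable S) (hS01 : ∀ ω, S ω = 0 ∨ S ω = 1) : Integrable S P :=
  .of_bound hS.aestronglyMeasurable 1 <| .of_forall fun ω => by
    rcases hS01 ω with h | h <;> simp [h]

theorem integral_add_integral_residual_div_eq (hm : m ≤ mΩ) [SigmaFinite (P.trim hm)]
    {Y S g e q : Ω → ℝ} (hg : StronglyMeasurable[m] g) (he : StronglyMeasurable[m] e)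
    (hq : q =ᵐ[P] P[S | m]) (hq0 : ∀ᵐ ω ∂P, q ω ≠ 0)
    (hS : Integrable S P) (hg_int : Integrable g P) (hgS : Integrable (fun ω => g ω * S ω) P)
    (hresid : Integrable (fun ω => (Y ω - g ω) * S ω) P)
    (hresid_div : Integrable (fun ω => (Y ω - g ω) * S ω / e ω) P)
    (hadj : Integrable (fun ω => (P[fun ω => Y ω * S ω | m]) ω / q ω) P)
    (hdr : e =ᵐ[P] q ∨ P[fun ω => (Y ω - g ω) * S ω | m] =ᵐ[P] fun _ => 0) :
    ∫ ω, g ω ∂P + ∫ ω, (Y ω - g ω) * S ω / e ω ∂P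
      = ∫ ω, (P[fun ω => Y ω * S ω | m]) ω / q ω ∂P := by
  have hYS : Integrable (fun ω => Y ω * S ω) P :=
    (hresid.add hgS).congr (.of_forall fun ω => by simp only [Pi.add_apply]; ring)
  have hsplit : P[fun ω => (Y ω - g ω) * S ω | m]
      =ᵐ[P] fun ω => (P[fun ω => Y ω * S ω | m]) ω - g ω * q ω := by
    filter_upwards [condExp_sub_mul_ae_eq hg hS hgS hYS, hq] with ω h hqω
    rw [h, hqω]
  have hdiv : (fun ω => (Y ω - g ω) * S ω / e ω) = fun ω => (e ω)⁻¹ * ((Y ω - g ω) * S ω) :=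
    funext fun ω => div_eq_inv_mul _ _
  have hpull : ∫ ω, (Y ω - g ω) * S ω / e ω ∂P
      = ∫ ω, (e ω)⁻¹ * (P[fun ω => (Y ω - g ω) * S ω | m]) ω ∂P := by
    rw [hdiv]
    exact integral_mul_eq_integral_mul_condExp hm he.measurable.inv.stronglyMeasurable
      (hdiv ▸ hresid_div) hresid
  rcases hdr with he_q | hzero
  · have hae : (fun ω => (e ω)⁻¹ * (P[fun ω => (Y ω - g ω) * S ω | m]) ω)
        =ᵐ[P] fun ω => (P[fun ω => Y ω * S ω | m]) ω / q ω - g ω := by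
      filter_upwards [he_q, hsplit, hq0] with ω he_qω hsplitω hq0ω
      rw [he_qω, hsplitω]
      field_simp
    rw [hpull, integral_congr_ae hae, integral_sub hadj hg_int]
    ring
  · have hcorr : ∫ ω, (Y ω - g ω) * S ω / e ω ∂P = 0 := by
      rw [hpull, integral_congr_ae (hzero.mono fun ω hω => by rw [hω, mul_zero]), integral_zero]
    have hadj_eq : (fun ω => (P[fun ω => Y ω * S ω | m]) ω / q ω) =ᵐ[P] g := by
      filter_upwards [hsplit, hzero, hq0] with ω hsplitω hzeroω hq0ω
      rw [div_eq_iff hq0ω]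
      linarith
    rw [hcorr, integral_congr_ae hadj_eq, add_zero]

theorem integral_add_integral_residual_div_eq_of_binary [IsFiniteMeasure P] (hm : m ≤ mΩ)
    {Y S g e q : Ω → ℝ} (hS : Measurable S) (hS01 : ∀ ω, S ω = 0 ∨ S ω = 1)
    (hg : StronglyMeasurable[m] g) (he : StronglyMeasurable[m] e)
    (he_pos : ∀ᵐ ω ∂P, 0 < e ω) (he_lt : ∀ᵐ ω ∂P, e ω < 1)
    (hq : q =ᵐ[P] P[S | m]) (hq0 : ∀ᵐ ω ∂P, q ω ≠ 0) (hg_int : Integrable g P)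
    (hresid_div : Integrable (fun ω => (Y ω - g ω) * S ω / e ω) P)
    (hadj : Integrable (fun ω => (P[fun ω => Y ω * S ω | m]) ω / q ω) P)
    (hdr : e =ᵐ[P] q ∨ P[fun ω => (Y ω - g ω) * S ω | m] =ᵐ[P] fun _ => 0) :
    ∫ ω, g ω ∂P + ∫ ω, (Y ω - g ω) * S ω / e ω ∂P
      = ∫ ω, (P[fun ω => Y ω * S ω | m]) ω / q ω ∂P := by
  have hS_le : ∀ᵐ ω ∂P, ‖S ω‖ ≤ 1 := .of_forall fun ω => by
    rcases hS01 ω with h | h <;> simp [h]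
  have he_le : ∀ᵐ ω ∂P, ‖e ω‖ ≤ 1 := by
    filter_upwards [he_pos, he_lt] with ω h0 h1
    rw [Real.norm_eq_abs, abs_of_pos h0]
    exact h1.le
  have hresid : Integrable (fun ω => (Y ω - g ω) * S ω) P := by
    refine (hresid_div.bdd_mul (he.mono hm).aestronglyMeasurable he_le).congr ?_
    filter_upwards [he_pos] with ω hω
    exact mul_div_cancel₀ _ hω.ne'
  exact integral_add_integral_residual_div_eq hm hg he hq hq0
    (integrable_of_forall_eq_zero_or_eq_one hS hS01) hg_int
    (hg_int.mul_bdd hS.aestronglyMeasurable hS_le) hresid hresid_div hadj hdr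

end

theorem doubly_robust_ate_general
    {Ω : Type*} [MeasurableSpace Ω] (P : Measure Ω) [IsProbabilityMeasure P]
    {d : ℕ} (X : Ω → (Fin d → ℝ)) (T Y : Ω → ℝ)
    (hX : Measurable X) (hT : Measurable T)
    (hT01 : ∀ ω, T ω = 0 ∨ T ω = 1)
    (p : Ω → ℝ)
    (hp : p =ᵐ[P] P[T | MeasurableSpace.comap X inferInstance])
    (hp_pos : ∀ᵐ ω ∂P, 0 < p ω) (hp_lt : ∀ᵐ ω ∂P, p ω < 1)
    (π μ₁ μ₀ : (Fin d → ℝ) → ℝ)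
    (hπ : Measurable π) (hμ₁ : Measurable μ₁) (hμ₀ : Measurable μ₀)
    (hπ_pos : ∀ᵐ ω ∂P, 0 < π (X ω)) (hπ_lt : ∀ᵐ ω ∂P, π (X ω) < 1)
    (h_int_μ₁ : Integrable (fun ω => μ₁ (X ω)) P)
    (h_int_μ₀ : Integrable (fun ω => μ₀ (X ω)) P)
    (h_int_resid₁ : Integrable (fun ω => (Y ω - μ₁ (X ω)) * T ω / π (X ω)) P)
    (h_int_resid₀ : Integrable (fun ω => (Y ω - μ₀ (X ω)) * (1 - T ω) / (1 - π (X ω))) P)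
    (h_int_adj₁ : Integrable
      (fun ω => (P[(fun ω' => Y ω' * T ω') | MeasurableSpace.comap X inferInstance]) ω / p ω) P)
    (h_int_adj₀ : Integrable
      (fun ω => (P[(fun ω' => Y ω' * (1 - T ω')) | MeasurableSpace.comap X inferInstance]) ω
        / (1 - p ω)) P)
    (hdr : (∀ᵐ ω ∂P, π (X ω) = p ω) ∨
      ((P[(fun ω => (Y ω - μ₁ (X ω)) * T ω) | MeasurableSpace.comap X inferInstance]
          =ᵐ[P] fun _ => 0) ∧
       (P[(fun ω => (Y ω - μ₀ (X ω)) * (1 - T ω)) | MeasurableSpace.comap X inferInstance]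
          =ᵐ[P] fun _ => 0))) :
    ∫ ω, (μ₁ (X ω) - μ₀ (X ω) + (Y ω - μ₁ (X ω)) * T ω / π (X ω)
        - (Y ω - μ₀ (X ω)) * (1 - T ω) / (1 - π (X ω))) ∂P =
      ∫ ω, ((P[(fun ω' => Y ω' * T ω') | MeasurableSpace.comap X inferInstance]) ω / p ω
        - (P[(fun ω' => Y ω' * (1 - T ω')) | MeasurableSpace.comap X inferInstance]) ω
          / (1 - p ω)) ∂P := by
  have hm : MeasurableSpace.comap X inferInstance ≤ ‹MeasurableSpace Ω› := hX.comap_le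
  have hXm := comap_measurable (m := inferInstance) X
  have treated := integral_add_integral_residual_div_eq_of_binary hm hT hT01
    (g := fun ω => μ₁ (X ω)) (e := fun ω => π (X ω))
    (hμ₁.comp hXm).stronglyMeasurable (hπ.comp hXm).stronglyMeasurable hπ_pos hπ_lt hp
    (hp_pos.mono fun _ h => h.ne') h_int_μ₁ h_int_resid₁ h_int_adj₁ (hdr.imp id And.left)
  have control := integral_add_integral_residual_div_eq_of_binary hm (measurable_const.sub hT)
    (S := fun ω => 1 - T ω) (g := fun ω => μ₀ (X ω)) (e := fun ω => 1 - π (X ω))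
    (q := fun ω => 1 - p ω)
    (fun ω => by rcases hT01 ω with h | h <;> simp [h])
    (hμ₀.comp hXm).stronglyMeasurable ((hπ.comp hXm).const_sub 1).stronglyMeasurable
    (hπ_lt.mono fun _ h => sub_pos.2 h) (hπ_pos.mono fun _ h => sub_lt_self 1 h)
    ((hp.fun_comp (1 - ·)).trans
      (condExp_one_sub hm (integrable_of_forall_eq_zero_or_eq_one hT hT01)).symm)
    (hp_lt.mono fun _ h => (sub_pos.2 h).ne') h_int_μ₀ h_int_resid₀ h_int_adj₀
    (hdr.imp (Filter.EventuallyEq.fun_comp · (1 - ·)) And.right)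
  calc _ = ∫ ω, ((μ₁ (X ω) + (Y ω - μ₁ (X ω)) * T ω / π (X ω))
          - (μ₀ (X ω) + (Y ω - μ₀ (X ω)) * (1 - T ω) / (1 - π (X ω)))) ∂P := by
        congr 1; ext ω; ring
    _ = _ := by
      rw [integral_sub (by exact h_int_μ₁.add h_int_resid₁) (by exact h_int_μ₀.add h_int_resid₀),
        integral_add h_int_μ₁ h_int_resid₁, integral_add h_int_μ₀ h_int_resid₀, treated, control,
        integral_sub h_int_adj₁ h_int_adj₀]

/-- **Doubly robust identification of the ATE functional.**
The AIPW functional `θ(π, μ₁, μ₀)` equals the adjusted treatment-effect functional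
`E[ E[Y·T | σ(X)]/E[T | σ(X)] − E[Y·(1−T) | σ(X)]/(1 − E[T | σ(X)]) ]` whenever either
the propensity nuisance `π` is a correct version of `E[T | σ(X)]`, or both outcome
residuals have vanishing conditional mean given `σ(X)`. -/
theorem doubly_robust_ate
    {Ω : Type*} [MeasurableSpace Ω] (P : Measure Ω) [IsProbabilityMeasure P]
    {d : ℕ} (X : Ω → (Fin d → ℝ)) (T Y : Ω → ℝ)
    (hX : Measurable X) (hT : Measurable T) (hY : Measurable Y)
    (hT01 : ∀ ω, T ω = 0 ∨ T ω = 1)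
    (p : Ω → ℝ)
    (hp : p =ᵐ[P] P[T | MeasurableSpace.comap X inferInstance])
    (hp_pos : ∀ᵐ ω ∂P, 0 < p ω) (hp_lt : ∀ᵐ ω ∂P, p ω < 1)
    (π μ₁ μ₀ : (Fin d → ℝ) → ℝ)
    (hπ : Measurable π) (hμ₁ : Measurable μ₁) (hμ₀ : Measurable μ₀)
    (hπ_pos : ∀ᵐ ω ∂P, 0 < π (X ω)) (hπ_lt : ∀ᵐ ω ∂P, π (X ω) < 1)
    (h_int_μ₁ : Integrable (fun ω => μ₁ (X ω)) P)
    (h_int_μ₀ : Integrable (fun ω => μ₀ (X ω)) P)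
    (h_int_resid₁ : Integrable (fun ω => (Y ω - μ₁ (X ω)) * T ω / π (X ω)) P)
    (h_int_resid₀ : Integrable (fun ω => (Y ω - μ₀ (X ω)) * (1 - T ω) / (1 - π (X ω))) P)
    (h_int_ipw₁ : Integrable (fun ω => Y ω * T ω / π (X ω)) P)
    (h_int_ipw₀ : Integrable (fun ω => Y ω * (1 - T ω) / (1 - π (X ω))) P)
    (h_int_adj₁ : Integrable
      (fun ω => (P[(fun ω' => Y ω' * T ω') | MeasurableSpace.comap X inferInstance]) ω / p ω) P)
    (h_int_adj₀ : Integrable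
      (fun ω => (P[(fun ω' => Y ω' * (1 - T ω')) | MeasurableSpace.comap X inferInstance]) ω
        / (1 - p ω)) P)
    (hdr : (∀ᵐ ω ∂P, π (X ω) = p ω) ∨
      ((P[(fun ω => (Y ω - μ₁ (X ω)) * T ω) | MeasurableSpace.comap X inferInstance]
          =ᵐ[P] fun _ => 0) ∧
       (P[(fun ω => (Y ω - μ₀ (X ω)) * (1 - T ω)) | MeasurableSpace.comap X inferInstance]
          =ᵐ[P] fun _ => 0))) :
    ∫ ω, (μ₁ (X ω) - μ₀ (X ω) + (Y ω - μ₁ (X ω)) * T ω / π (X ω)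
        - (Y ω - μ₀ (X ω)) * (1 - T ω) / (1 - π (X ω))) ∂P =
      ∫ ω, ((P[(fun ω' => Y ω' * T ω') | MeasurableSpace.comap X inferInstance]) ω / p ω
        - (P[(fun ω' => Y ω' * (1 - T ω')) | MeasurableSpace.comap X inferInstance]) ω
          / (1 - p ω)) ∂P :=
  doubly_robust_ate_general P X T Y hX hT hT01 p hp hp_pos hp_lt π μ₁ μ₀ hπ hμ₁ hμ₀ hπ_pos hπ_lt
    h_int_μ₁ h_int_μ₀ h_int_resid₁ h_int_resid₀ h_int_adj₁ h_int_adj₀ hdr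
end

section
/- Y-invariance reduction of the AIPW functional: Let X : Ω → ℝ^d be measurable, T : Ω → ℝ measurable with values in {0,1}, Y : Ω → ℝ measurable, and set 𝒢 = σ(X). Let μ₁, μ₀ : ℝ^d → ℝ be measurable functions such that E[(Y − μ₁(X))·T | 𝒢] = 0 and E[(Y − μ₀(X))·(1−T) | 𝒢] = 0 almost surely. Let π : ℝ^d → ℝ be any measurable function with 0 < π(X) < 1 almost surely, and assume μ₁(X), μ₀(X), (Y − μ₁(X))·T, (Y − μ₀(X))·(1−T), (Y − μ₁(X))·T/π(X), and (Y − μ₀(X))·(1−T)/(1−π(X)) are integrable. Then θ(π, μ₁, μ₀) = E[ μ₁(X) − μ₀(X) ]. -/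
open MeasureTheory

/-! Inverse-propensity weights are `σ(X)`-measurable, so they pull out of the conditional
expectation given `X`; a residual that is conditionally centred given `X` therefore stays
centred after weighting, and both augmentation terms of the AIPW functional integrate to zero.
-/

theorem integral_mul_eq_zero_of_condExp_eq_zero {Ω : Type*} {m m₀ : MeasurableSpace Ω}
    {μ : Measure Ω} (hm : m ≤ m₀) [SigmaFinite (μ.trim hm)]
    {f g : Ω → ℝ} (hf : StronglyMeasurable[m] f) (hfg : Integrable (f * g) μ)
    (hg : Integrable g μ) (hcond : μ[g | m] =ᵐ[μ] 0) :
    ∫ x, f x * g x ∂μ = 0 := by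
  have hpull : μ[f * g | m] =ᵐ[μ] 0 := by
    filter_upwards [condExp_mul_of_stronglyMeasurable_left hf hfg hg, hcond] with x hx h0
    simp [hx, h0]
  calc ∫ x, f x * g x ∂μ = ∫ x, (μ[f * g | m]) x ∂μ := (integral_condExp hm).symm
    _ = 0 := by rw [integral_congr_ae hpull, Pi.zero_def, integral_zero]

theorem integral_div_comp_eq_zero_of_condExp_comap_eq_zero
    {Ω β : Type*} [MeasurableSpace Ω] [MeasurableSpace β] {P : Measure Ω} [IsFiniteMeasure P]
    {X : Ω → β} (hX : Measurable X) {h : β → ℝ} (hh : Measurable h) {r : Ω → ℝ}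
    (hr : Integrable r P) (hcond : P[r | MeasurableSpace.comap X inferInstance] =ᵐ[P] 0)
    (hint : Integrable (fun ω => r ω / h (X ω)) P) :
    ∫ ω, r ω / h (X ω) ∂P = 0 := by
  have hweight : StronglyMeasurable[MeasurableSpace.comap X inferInstance]
      (fun ω => (h (X ω))⁻¹) :=
    (hh.inv.comp (comap_measurable X)).stronglyMeasurable
  simp_rw [div_eq_inv_mul] at hint ⊢
  exact integral_mul_eq_zero_of_condExp_eq_zero hX.comap_le hweight hint hr hcond

theorem aipw_Y_invariance_reduction_general
    {Ω : Type*} [MeasurableSpace Ω] (P : Measure Ω) [IsProbabilityMeasure P]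
    {d : ℕ} (X : Ω → (Fin d → ℝ)) (T Y : Ω → ℝ)
    (hX : Measurable X)
    (μ₁ μ₀ π : (Fin d → ℝ) → ℝ)
    (hπ : Measurable π)
    (hres₁ : P[(fun ω => (Y ω - μ₁ (X ω)) * T ω) | MeasurableSpace.comap X inferInstance]
      =ᵐ[P] fun _ => 0)
    (hres₀ : P[(fun ω => (Y ω - μ₀ (X ω)) * (1 - T ω)) | MeasurableSpace.comap X inferInstance]
      =ᵐ[P] fun _ => 0)
    (h_int_μ₁ : Integrable (fun ω => μ₁ (X ω)) P)
    (h_int_μ₀ : Integrable (fun ω => μ₀ (X ω)) P)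
    (h_int_r₁ : Integrable (fun ω => (Y ω - μ₁ (X ω)) * T ω) P)
    (h_int_r₀ : Integrable (fun ω => (Y ω - μ₀ (X ω)) * (1 - T ω)) P)
    (h_int_resid₁ : Integrable (fun ω => (Y ω - μ₁ (X ω)) * T ω / π (X ω)) P)
    (h_int_resid₀ : Integrable (fun ω => (Y ω - μ₀ (X ω)) * (1 - T ω) / (1 - π (X ω))) P) :
    ∫ ω, (μ₁ (X ω) - μ₀ (X ω) + (Y ω - μ₁ (X ω)) * T ω / π (X ω)
        - (Y ω - μ₀ (X ω)) * (1 - T ω) / (1 - π (X ω))) ∂P =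
      ∫ ω, (μ₁ (X ω) - μ₀ (X ω)) ∂P := by
  have hz₁ : ∫ ω, (Y ω - μ₁ (X ω)) * T ω / π (X ω) ∂P = 0 :=
    integral_div_comp_eq_zero_of_condExp_comap_eq_zero hX hπ h_int_r₁ hres₁ h_int_resid₁
  have hz₀ : ∫ ω, (Y ω - μ₀ (X ω)) * (1 - T ω) / (1 - π (X ω)) ∂P = 0 :=
    integral_div_comp_eq_zero_of_condExp_comap_eq_zero hX (measurable_const.sub hπ) h_int_r₀
      hres₀ h_int_resid₀
  have h_int_plugin : Integrable (fun ω => μ₁ (X ω) - μ₀ (X ω)) P := h_int_μ₁.sub h_int_μ₀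
  rw [integral_sub (f := fun ω => μ₁ (X ω) - μ₀ (X ω) + (Y ω - μ₁ (X ω)) * T ω / π (X ω))
      (h_int_plugin.add h_int_resid₁) h_int_resid₀,
    integral_add h_int_plugin h_int_resid₁, hz₁, hz₀, add_zero, sub_zero]

/-- **Y-invariance reduction of the AIPW functional.**
If the outcome functions `μ₁, μ₀` are correct versions of the conditional outcome means,
i.e. both residuals `(Y − μ₁(X))·T` and `(Y − μ₀(X))·(1−T)` have vanishing conditional
mean given `σ(X)`, then the AIPW functional reduces to the plug-in outcome functional
`E[μ₁(X) − μ₀(X)]`, regardless of the propensity nuisance `π`. -/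
theorem aipw_Y_invariance_reduction
    {Ω : Type*} [MeasurableSpace Ω] (P : Measure Ω) [IsProbabilityMeasure P]
    {d : ℕ} (X : Ω → (Fin d → ℝ)) (T Y : Ω → ℝ)
    (hX : Measurable X) (hT : Measurable T) (hY : Measurable Y)
    (hT01 : ∀ ω, T ω = 0 ∨ T ω = 1)
    (μ₁ μ₀ π : (Fin d → ℝ) → ℝ)
    (hμ₁ : Measurable μ₁) (hμ₀ : Measurable μ₀) (hπ : Measurable π)
    (hres₁ : P[(fun ω => (Y ω - μ₁ (X ω)) * T ω) | MeasurableSpace.comap X inferInstance]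
      =ᵐ[P] fun _ => 0)
    (hres₀ : P[(fun ω => (Y ω - μ₀ (X ω)) * (1 - T ω)) | MeasurableSpace.comap X inferInstance]
      =ᵐ[P] fun _ => 0)
    (hπ_pos : ∀ᵐ ω ∂P, 0 < π (X ω)) (hπ_lt : ∀ᵐ ω ∂P, π (X ω) < 1)
    (h_int_μ₁ : Integrable (fun ω => μ₁ (X ω)) P)
    (h_int_μ₀ : Integrable (fun ω => μ₀ (X ω)) P)
    (h_int_r₁ : Integrable (fun ω => (Y ω - μ₁ (X ω)) * T ω) P)
    (h_int_r₀ : Integrable (fun ω => (Y ω - μ₀ (X ω)) * (1 - T ω)) P)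
    (h_int_resid₁ : Integrable (fun ω => (Y ω - μ₁ (X ω)) * T ω / π (X ω)) P)
    (h_int_resid₀ : Integrable (fun ω => (Y ω - μ₀ (X ω)) * (1 - T ω) / (1 - π (X ω))) P) :
    ∫ ω, (μ₁ (X ω) - μ₀ (X ω) + (Y ω - μ₁ (X ω)) * T ω / π (X ω)
        - (Y ω - μ₀ (X ω)) * (1 - T ω) / (1 - π (X ω))) ∂P =
      ∫ ω, (μ₁ (X ω) - μ₀ (X ω)) ∂P :=
  aipw_Y_invariance_reduction_general P X T Y hX μ₁ μ₀ π hπ hres₁ hres₀ h_int_μ₁ h_int_μ₀ h_int_r₁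
    h_int_r₀ h_int_resid₁ h_int_resid₀
end

section
/- Zero-temperature limit of the Gumbel-softmax gate: Let L : Ω → ℝ be a random variable whose law has cumulative distribution function x ↦ 1/(1 + exp(−x)) (the standard logistic distribution), and let w ∈ ℝ. Then the limit as τ → 0⁺ of E[ 1/(1 + exp(−(w + L)/τ)) ] exists and equals 1/(1 + exp(−w)). -/
open MeasureTheory Filter

/-! As `τ → 0⁺`, `sigmoid ((w + L) / τ)` tends to the indicator of `{0 < w + L}` off the event
`{L = -w}`. The logistic CDF is continuous, so that event is null, and dominated convergence
(the gate lies in `[0, 1]`) gives the limit `P (L > -w) = 1 - sigmoid (-w) = sigmoid w`. -/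

open Set Topology ProbabilityTheory Real

lemma tendsto_sigmoid_div_nhdsGT_zero_of_pos {y : ℝ} (hy : 0 < y) :
    Tendsto (fun τ => sigmoid (y / τ)) (𝓝[>] 0) (𝓝 1) :=
  tendsto_sigmoid_atTop.comp (tendsto_inv_nhdsGT_zero.const_mul_atTop hy)

lemma tendsto_sigmoid_div_nhdsGT_zero_of_neg {y : ℝ} (hy : y < 0) :
    Tendsto (fun τ => sigmoid (y / τ)) (𝓝[>] 0) (𝓝 0) :=
  tendsto_sigmoid_atBot.comp (tendsto_inv_nhdsGT_zero.const_mul_atTop_of_neg hy)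

lemma measure_singleton_eq_zero_of_continuousAt_cdf (μ : Measure ℝ) [IsProbabilityMeasure μ]
    {x : ℝ} (h : ContinuousAt (cdf μ) x) : μ {x} = 0 := by
  rw [← measure_cdf μ, StieltjesFunction.measure_singleton, h.continuousWithinAt.leftLim_eq,
    sub_self, ENNReal.ofReal_zero]

section

variable {Ω : Type*} [MeasurableSpace Ω] {P : Measure Ω} {X : Ω → ℝ}

lemma cdf_map_apply [IsProbabilityMeasure P] (hX : Measurable X) (x : ℝ) :
    cdf (P.map X) x = P.real {ω | X ω ≤ x} := by
  have := Measure.isProbabilityMeasure_map (μ := P) hX.aemeasurable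
  rw [cdf_eq_real, map_measureReal_apply hX measurableSet_Iic]
  rfl

lemma tendsto_integral_sigmoid_div_nhdsGT_zero [IsFiniteMeasure P] (hX : Measurable X)
    (h_atom : P {ω | X ω = 0} = 0) :
    Tendsto (fun τ => ∫ ω, sigmoid (X ω / τ) ∂P) (𝓝[>] 0) (𝓝 (P.real {ω | 0 < X ω})) := by
  rw [← integral_indicator_one (s := {ω | 0 < X ω}) (hX measurableSet_Ioi)]
  refine tendsto_integral_filter_of_dominated_convergence (fun _ => 1) ?_ ?_
    (integrable_const 1) ?_
  · exact .of_forall fun τ =>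
      (continuous_sigmoid.measurable.comp (hX.div_const τ)).aestronglyMeasurable
  · refine .of_forall fun τ => .of_forall fun ω => ?_
    rw [norm_of_nonneg (sigmoid_nonneg _)]
    exact sigmoid_le_one _
  · filter_upwards [measure_eq_zero_iff_ae_notMem.mp h_atom] with ω hω
    rcases lt_or_gt_of_ne (hω : X ω ≠ 0) with hneg | hpos
    · simpa [indicator_apply, hneg.le.not_gt] using tendsto_sigmoid_div_nhdsGT_zero_of_neg hneg
    · simpa [indicator_apply, hpos] using tendsto_sigmoid_div_nhdsGT_zero_of_pos hpos

end

/-- **Zero-temperature limit of the Gumbel-softmax gate.**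
If `L` is standard logistic (CDF equal to the sigmoid) and `w ∈ ℝ`, then as the
temperature `τ → 0⁺`, the expected relaxed gate `E[sigmoid((w + L)/τ)]` converges to the
Bernoulli success probability `sigmoid(w)`. -/
theorem gumbel_softmax_zero_temperature_limit
    {Ω : Type*} [MeasurableSpace Ω] (P : Measure Ω) [IsProbabilityMeasure P]
    (L : Ω → ℝ) (hL : Measurable L)
    (h_cdf : ∀ x : ℝ, P {ω | L ω ≤ x} = ENNReal.ofReal (1 / (1 + Real.exp (-x))))
    (w : ℝ) :
    Tendsto (fun τ : ℝ => ∫ ω, 1 / (1 + Real.exp (-(w + L ω) / τ)) ∂P)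
      (nhdsWithin 0 (Set.Ioi 0)) (nhds (1 / (1 + Real.exp (-w)))) := by
  simp only [one_div, neg_div, ← sigmoid_def] at h_cdf ⊢
  have h_law : cdf (P.map L) = sigmoid := by
    ext x
    rw [cdf_map_apply hL, measureReal_def, h_cdf, ENNReal.toReal_ofReal (sigmoid_nonneg x)]
  have h_atom : P {ω | w + L ω = 0} = 0 := by
    have := Measure.isProbabilityMeasure_map (μ := P) hL.aemeasurable
    have h_singleton := measure_singleton_eq_zero_of_continuousAt_cdf (P.map L)
      (h_law ▸ continuous_sigmoid.continuousAt (x := -w))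
    rw [Measure.map_apply hL (measurableSet_singleton _)] at h_singleton
    convert h_singleton using 2
    ext ω
    simp [eq_neg_iff_add_eq_zero, add_comm]
  have h_value : P.real {ω | 0 < w + L ω} = sigmoid w := by
    have h_compl : {ω | 0 < w + L ω} = {ω | L ω ≤ -w}ᶜ := by
      ext ω
      simp only [mem_ofPred_eq, mem_compl_iff, not_le, neg_lt_iff_pos_add']
    rw [h_compl, probReal_compl_eq_one_sub (s := {ω | L ω ≤ -w}) (hL measurableSet_Iic),
      measureReal_def, h_cdf, ENNReal.toReal_ofReal (sigmoid_nonneg _), sigmoid_neg, sub_sub_cancel]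
  simpa only [h_value] using
    tendsto_integral_sigmoid_div_nhdsGT_zero (X := fun ω => w + L ω) (by fun_prop) h_atom
end
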